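/- Let E be the Banach algebra of continuous ℂ-linear endomorphisms of the space of n×n complex matrices, let L_0, L, Y ∈ E with L_0∘Y − Y∘L_0 = L, let P ∈ E be idempotent (P∘P = P), and set Q := 1 − P and 𝓛(s) := exp(−s L_0)∘L∘exp(s L_0). Then for every t ∈ ℝ the second-order time-convolutionless coefficient K_2(t) := ∫_0^t P∘𝓛(t)∘Q∘𝓛(s)∘P ds satisfies K_2(t) = P∘𝓛(t)∘Q∘(Y − exp(−t L_0)∘Y∘exp(t L_0))∘P. -/

import Mathlib

/-! Since `[L₀, Y] = L`, the conjugate `e^{-sL₀} Y e^{sL₀}` has derivative `-e^{-sL₀} L e^{sL₀}`,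
so by the fundamental theorem of calculus `∫₀ᵗ 𝓛(s) ds = Y - e^{-tL₀} Y e^{tL₀}`. The factors
`P 𝓛(t) Q` on the left and `P` on the right are constant in `s` and pass through the integral. -/

open MeasureTheory

attribute [local instance] Matrix.linftyOpNormedAddCommGroup Matrix.linftyOpNormedSpace

noncomputable instance stmt8CLMNormedRing {n : ℕ} :
    NormedRing (Matrix (Fin n) (Fin n) ℂ →L[ℂ] Matrix (Fin n) (Fin n) ℂ) :=
  ContinuousLinearMap.toNormedRing

noncomputable instance stmt8CLMNormedSpace {n : ℕ} :
    NormedSpace ℂ (Matrix (Fin n) (Fin n) ℂ →L[ℂ] Matrix (Fin n) (Fin n) ℂ) :=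
  ContinuousLinearMap.toNormedSpace

instance stmt8CLMIsTopologicalRing {n : ℕ} :
    IsTopologicalRing (Matrix (Fin n) (Fin n) ℂ →L[ℂ] Matrix (Fin n) (Fin n) ℂ) :=
  @NonUnitalSeminormedRing.toIsTopologicalRing _ _

section ExpConjugation

open NormedSpace

variable {𝔸 : Type*} [NormedRing 𝔸] [NormedAlgebra ℝ 𝔸] [CompleteSpace 𝔸]

theorem hasDerivAt_exp_neg_smul_mul_mul_exp_smul (a y : 𝔸) (s : ℝ) :
    HasDerivAt (fun u : ℝ => exp (-(u • a)) * y * exp (u • a))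
      (exp (-(s • a)) * (y * a - a * y) * exp (s • a)) s := by
  have hneg : HasDerivAt (fun u : ℝ => exp (-(u • a))) (exp (-(s • a)) * -a) s := by
    simpa only [smul_neg] using hasDerivAt_exp_smul_const (-a) s
  refine ((hneg.mul_const y).mul (hasDerivAt_exp_smul_const' a s)).congr_deriv ?_
  noncomm_ring

theorem continuous_exp_neg_smul_mul_mul_exp_smul (a b : 𝔸) :
    Continuous fun s : ℝ => exp (-(s • a)) * b * exp (s • a) := by
  have hexp : ∀ x : 𝔸, Continuous fun s : ℝ => exp (s • x) := fun x =>
    continuous_iff_continuousAt.2 fun s => (hasDerivAt_exp_smul_const x s).continuousAt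
  exact (((hexp (-a)).mul (continuous_const (y := b))).mul (hexp a)).congr fun s => by
    simp only [Pi.mul_apply, smul_neg]

theorem integral_exp_neg_smul_mul_mul_exp_smul {a b y : 𝔸} (hy : a * y - y * a = b) (t : ℝ) :
    ∫ s in (0 : ℝ)..t, exp (-(s • a)) * b * exp (s • a) =
      y - exp (-(t • a)) * y * exp (t • a) := by
  have hftc := intervalIntegral.integral_eq_sub_of_hasDerivAt
    (fun s _ => hasDerivAt_exp_neg_smul_mul_mul_exp_smul a y s)
    ((continuous_exp_neg_smul_mul_mul_exp_smul a (y * a - a * y)).intervalIntegrable 0 t)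
  rw [← neg_sub, hy] at hftc
  simp only [mul_neg, neg_mul, intervalIntegral.integral_neg, zero_smul, neg_zero, exp_zero,
    mul_one, one_mul] at hftc
  rw [← neg_sub, ← hftc, neg_neg]

theorem intervalIntegral_const_mul_mul_const {f : ℝ → 𝔸} {a b : ℝ}
    (hf : IntervalIntegrable f volume a b) (c d : 𝔸) :
    ∫ x in a..b, c * f x * d = c * (∫ x in a..b, f x) * d :=
  (ContinuousLinearMap.mulLeftRight ℝ 𝔸 c d).intervalIntegral_comp_comm hf

theorem intervalIntegral_const_mul_exp_conj_mul_const {a b y : 𝔸} (hy : a * y - y * a = b)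
    (c d : 𝔸) (t : ℝ) :
    ∫ s in (0 : ℝ)..t, c * (exp (-(s • a)) * b * exp (s • a)) * d =
      c * (y - exp (-(t • a)) * y * exp (t • a)) * d := by
  rw [intervalIntegral_const_mul_mul_const
    ((continuous_exp_neg_smul_mul_mul_exp_smul a b).intervalIntegrable 0 t),
    integral_exp_neg_smul_mul_mul_exp_smul hy]

end ExpConjugation

theorem stmt8_general (n : ℕ)
    (L₀ L Y P : Matrix (Fin n) (Fin n) ℂ →L[ℂ] Matrix (Fin n) (Fin n) ℂ)
    (hY : L₀ * Y - Y * L₀ = L)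
    (Q : Matrix (Fin n) (Fin n) ℂ →L[ℂ] Matrix (Fin n) (Fin n) ℂ)
    (𝓛 : ℝ → (Matrix (Fin n) (Fin n) ℂ →L[ℂ] Matrix (Fin n) (Fin n) ℂ))
    (h𝓛 : ∀ s, 𝓛 s = NormedSpace.exp (-(s • L₀)) * L * NormedSpace.exp (s • L₀))
    (t : ℝ) :
    (∫ s in (0:ℝ)..t, P * 𝓛 t * Q * 𝓛 s * P) =
      P * 𝓛 t * Q *
        (Y - NormedSpace.exp (-(t • L₀)) * Y * NormedSpace.exp (t • L₀)) * P := by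
  -- Instance search does not see these structures on the operator space (its norm comes from
  -- `linftyOp`, its topology from the Pi one), so they are supplied by hand.
  have hcomplete : CompleteSpace (Matrix (Fin n) (Fin n) ℂ →L[ℂ] Matrix (Fin n) (Fin n) ℂ) :=
    FiniteDimensional.complete ℂ _
  simp only [h𝓛]
  exact @intervalIntegral_const_mul_exp_conj_mul_const _ stmt8CLMNormedRing
    (@NormedAlgebra.complexToReal _ _ ContinuousLinearMap.toNormedAlgebra) hcomplete _ _ _ hY _ _ t

/-- with `𝓛(s) = e^{-s L_0} L e^{s L_0}`, `[L_0, Y] = L`, `P` idempotent and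
`Q = 1 - P`, the second-order time-convolutionless coefficient
`K_2(t) = ∫_0^t P 𝓛(t) Q 𝓛(s) P ds` equals
`P 𝓛(t) Q (Y - e^{-t L_0} Y e^{t L_0}) P`. -/
theorem stmt8 (n : ℕ)
    (L₀ L Y P : Matrix (Fin n) (Fin n) ℂ →L[ℂ] Matrix (Fin n) (Fin n) ℂ)
    (hY : L₀ * Y - Y * L₀ = L) (hP : P * P = P)
    (Q : Matrix (Fin n) (Fin n) ℂ →L[ℂ] Matrix (Fin n) (Fin n) ℂ) (hQ : Q = 1 - P)
    (𝓛 : ℝ → (Matrix (Fin n) (Fin n) ℂ →L[ℂ] Matrix (Fin n) (Fin n) ℂ))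
    (h𝓛 : ∀ s, 𝓛 s = NormedSpace.exp (-(s • L₀)) * L * NormedSpace.exp (s • L₀))
    (t : ℝ) :
    (∫ s in (0:ℝ)..t, P * 𝓛 t * Q * 𝓛 s * P) =
      P * 𝓛 t * Q *
        (Y - NormedSpace.exp (-(t • L₀)) * Y * NormedSpace.exp (t • L₀)) * P :=
  stmt8_general n L₀ L Y P hY Q 𝓛 h𝓛 t
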